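/- The function h(z) = −i·sin(log(√(1−z) + i√z)) satisfies the confluent Heun equation h''(z) + ((1/2)/z + (1/2)/(z−1))h'(z) + (1/4)/(z(z−1)) · h(z) = 0 for all z in the real interval (0,1). -/

import Mathlib

/-!
With `L z = log (√(1 - z) + i √z)` one has `L' = i / (2 √(z (1 - z)))`, so `L'² = q` and
`L'' = -p L'` for the coefficients `p = (1/2)/z + (1/2)/(z - 1)` and `q = (1/4)/(z (z - 1))` of the
equation. Since `(sin ∘ L)'' = -sin L · L'² + cos L · L''`, these two identities make every
multiple of `sin ∘ L` a solution of `y'' + p y' + q y = 0`.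
-/

open Complex Filter Topology

theorem const_mul_sin_comp_solves_ode {L L' : ℝ → ℂ} {L'' p q c : ℂ} {x : ℝ}
    (hL : ∀ᶠ y in 𝓝 x, HasDerivAt L (L' y) y) (hL' : HasDerivAt L' L'' x)
    (hq : L' x ^ 2 = q) (hp : L'' + p * L' x = 0) :
    deriv (deriv fun y => c * sin (L y)) x + p * deriv (fun y => c * sin (L y)) x
      + q * (c * sin (L x)) = 0 := by
  have hf : ∀ᶠ y in 𝓝 x, HasDerivAt (fun y => c * sin (L y)) (c * (cos (L y) * L' y)) y :=
    hL.mono fun y hy => ((hasDerivAt_sin (L y)).comp y hy).const_mul c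
  have hf' : HasDerivAt (fun y => c * (cos (L y) * L' y))
      (c * (-sin (L x) * L' x * L' x + cos (L x) * L'')) x :=
    (((hasDerivAt_cos (L x)).comp x hL.self_of_nhds).mul hL').const_mul c
  have hd : deriv (fun y => c * sin (L y)) =ᶠ[𝓝 x] fun y => c * (cos (L y) * L' y) :=
    hf.mono fun y hy => hy.deriv
  rw [hd.deriv_eq, hf'.deriv, hf.self_of_nhds.deriv]
  linear_combination (-c * sin (L x)) * hq + c * cos (L x) * hp

theorem hasDerivAt_sqrt_mul_one_sub {z : ℝ} (hz : z ∈ Set.Ioo (0 : ℝ) 1) :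
    HasDerivAt (fun w => √(w * (1 - w))) ((1 - 2 * z) / (2 * √(z * (1 - z)))) z := by
  have hpos : 0 < z * (1 - z) := mul_pos hz.1 (by linarith [hz.2])
  refine ((hasDerivAt_id' z).mul ((hasDerivAt_id' z).const_sub 1)).sqrt hpos.ne' |>.congr_deriv ?_
  simp only [Pi.mul_apply]
  ring

theorem hasDerivAt_log_sqrt_one_sub_add_I_mul_sqrt {z : ℝ} (hz : z ∈ Set.Ioo (0 : ℝ) 1) :
    HasDerivAt (fun w : ℝ => log (√(1 - w) + I * √w)) (I / (2 * √(z * (1 - z)))) z := by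
  obtain ⟨hz0, hz1⟩ := hz
  have ha : (√(1 - z) : ℂ) ≠ 0 := ofReal_ne_zero.mpr (Real.sqrt_pos.mpr (by linarith)).ne'
  have hb : (√z : ℂ) ≠ 0 := ofReal_ne_zero.mpr (Real.sqrt_pos.mpr hz0).ne'
  have hu : (√(1 - z) + I * √z : ℂ) ∈ slitPlane := by
    refine mem_slitPlane_iff.mpr (Or.inr ?_)
    simpa using hb
  have hA : HasDerivAt (fun w : ℝ => (√(1 - w) : ℂ)) (-1 / (2 * √(1 - z))) z := by
    refine (((hasDerivAt_id' z).const_sub 1).sqrt (by linarith : 1 - z ≠ 0)).ofReal_comp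
      |>.congr_deriv ?_
    push_cast; ring
  have hB : HasDerivAt (fun w : ℝ => (√w : ℂ)) (1 / (2 * √z)) z := by
    refine ((hasDerivAt_id' z).sqrt hz0.ne').ofReal_comp |>.congr_deriv ?_
    push_cast; ring
  refine (hA.add (hB.const_mul I)).clog_real hu |>.congr_deriv ?_
  simp only [Pi.add_apply]
  rw [Real.sqrt_mul hz0.le]
  push_cast
  field_simp [slitPlane_ne_zero hu]
  linear_combination -(√z : ℂ) * I_sq

theorem ofReal_sqrt_mul_one_sub_sq {z : ℝ} (hz : z ∈ Set.Icc (0 : ℝ) 1) :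
    (√(z * (1 - z)) : ℂ) ^ 2 = z * (1 - z) := by
  exact_mod_cast Real.sq_sqrt (mul_nonneg hz.1 (sub_nonneg.mpr hz.2))

theorem hasDerivAt_I_div_two_mul_sqrt_mul_one_sub {z : ℝ} (hz : z ∈ Set.Ioo (0 : ℝ) 1) :
    HasDerivAt (fun w : ℝ => I / (2 * √(w * (1 - w))))
      (-((1 - 2 * z) / (2 * (z * (1 - z)))) * (I / (2 * √(z * (1 - z))))) z := by
  have hpos : 0 < z * (1 - z) := mul_pos hz.1 (by linarith [hz.2])
  have hs : (√(z * (1 - z)) : ℂ) ≠ 0 := ofReal_ne_zero.mpr (Real.sqrt_pos.mpr hpos).ne'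
  refine (hasDerivAt_const z I).div ((hasDerivAt_sqrt_mul_one_sub hz).ofReal_comp.const_mul 2)
    (by simpa using hs) |>.congr_deriv ?_
  have hz0 : (z : ℂ) ≠ 0 := ofReal_ne_zero.mpr hz.1.ne'
  have hz1 : 1 - (z : ℂ) ≠ 0 := sub_ne_zero.mpr (ofReal_ne_one.mpr hz.2.ne).symm
  push_cast
  field_simp
  rw [ofReal_sqrt_mul_one_sub_sq (Set.Ioo_subset_Icc_self hz)]
  ring

/-- h(z) = −i·sin(log(√(1−z) + i√z)) (principal branches) satisfies
the confluent Heun equation h'' + ((1/2)/z + (1/2)/(z−1)) h' + (1/4)/(z(z−1)) h = 0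
on the real interval (0,1). -/
theorem stmt_8 : ∀ z ∈ Set.Ioo (0:ℝ) 1,
    deriv (deriv (fun w : ℝ => -Complex.I * Complex.sin (Complex.log
        ((Real.sqrt (1-w) : ℂ) + Complex.I * (Real.sqrt w : ℂ))))) z
      + ((((1:ℂ)/2)/(z:ℂ) + ((1:ℂ)/2)/((z:ℂ)-1)) : ℂ) *
          deriv (fun w : ℝ => -Complex.I * Complex.sin (Complex.log
            ((Real.sqrt (1-w) : ℂ) + Complex.I * (Real.sqrt w : ℂ)))) z
      + (((1:ℂ)/4)/((z:ℂ)*((z:ℂ)-1))) *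
          (-Complex.I * Complex.sin (Complex.log
            ((Real.sqrt (1-z) : ℂ) + Complex.I * (Real.sqrt z : ℂ)))) = 0 := by
  intro z hz
  have hz0 : (z : ℂ) ≠ 0 := ofReal_ne_zero.mpr hz.1.ne'
  have hz1 : (z : ℂ) - 1 ≠ 0 := sub_ne_zero.mpr (ofReal_ne_one.mpr hz.2.ne)
  have hz1' : 1 - (z : ℂ) ≠ 0 := sub_ne_zero.mpr (ofReal_ne_one.mpr hz.2.ne).symm
  refine const_mul_sin_comp_solves_ode (L := fun w => log (√(1 - w) + I * √w))
    (L' := fun w => I / (2 * √(w * (1 - w)))) ?_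
    (hasDerivAt_I_div_two_mul_sqrt_mul_one_sub hz) ?_ ?_
  · filter_upwards [isOpen_Ioo.mem_nhds hz] with w hw
    exact hasDerivAt_log_sqrt_one_sub_add_I_mul_sqrt hw
  · rw [div_pow, mul_pow, ofReal_sqrt_mul_one_sub_sq (Set.Ioo_subset_Icc_self hz), I_sq]
    field_simp
    ring
  · field_simp
    ring
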